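/- Let G be a group generated by a finite symmetric set and H ≤ G a subgroup. Then: (1) for every finitely supported f : G → ℂ one has ‖λ_{G/H}(f)‖ ≤ ‖f‖_h; (2) for every finitely supported f : G → ℝ with nonnegative values one has ‖f‖_* ≤ ‖λ_{G/H}(f)‖ and moreover ‖λ_{G/H}(f)‖ = ‖f‖_h. -/

import Mathlib

open scoped BigOperators

attribute [local instance] Classical.propDecidable

section Defs

variable {G : Type*} [Group G]

/-- Word length with respect to a generating set `S`. -/
noncomputable def wordLength (S : Set G) (x : G) : ℕ :=
  sInf {n | ∃ l : List G, (∀ s ∈ l, s ∈ S) ∧ l.length = n ∧ l.prod = x}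

/-- Convolution of finitely supported functions:
`(f * ϕ) x = ∑ z, f z * ϕ (z⁻¹ * x)`. -/
noncomputable def conv {k : Type*} [Semiring k] (f ϕ : G →₀ k) : G →₀ k :=
  f.sum fun z c => c • Finsupp.mapDomain (fun x => z * x) ϕ

/-- `n`-fold convolution power. -/
noncomputable def convPow {k : Type*} [Semiring k] (f : G →₀ k) : ℕ → G →₀ k
  | 0 => Finsupp.single 1 1
  | n + 1 => conv f (convPow f n)

/-- ℓ² norm of a finitely supported function. -/
noncomputable def l2Norm {α k : Type*} [NormedAddCommGroup k] (f : α →₀ k) : ℝ :=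
  Real.sqrt (∑ x ∈ f.support, ‖f x‖ ^ 2)

/-- ℓ¹ norm of a finitely supported function. -/
noncomputable def l1Norm {α k : Type*} [NormedAddCommGroup k] (f : α →₀ k) : ℝ :=
  ∑ x ∈ f.support, ‖f x‖

/-- The hybrid `(2,1)` norm with respect to the subgroup `H`:
`‖f‖_{(2,1)} = sqrt (∑_{gH ∈ G/H} (∑_{x ∈ gH} |f x|)²)`. -/
noncomputable def l21Norm (H : Subgroup G) {k : Type*} [NormedAddCommGroup k]
    (f : G →₀ k) : ℝ :=
  l2Norm (Finsupp.mapDomain (QuotientGroup.mk : G → G ⧸ H) (f.mapRange norm norm_zero))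

/-- Hybrid operator norm `‖f‖_h`. -/
noncomputable def hybridOpNorm (H : Subgroup G) (f : G →₀ ℂ) : ℝ :=
  sSup {c : ℝ | ∃ ϕ : G →₀ ℂ, l21Norm H ϕ ≤ 1 ∧ c = l21Norm H (conv f ϕ)}

/-- Regular operator norm `‖f‖_*`. -/
noncomputable def regOpNorm (f : G →₀ ℂ) : ℝ :=
  sSup {c : ℝ | ∃ ξ : G →₀ ℂ, l2Norm ξ ≤ 1 ∧ c = l2Norm (conv f ξ)}

/-- The quasi-regular representation:
`(λ_{G/H}(f) ξ)(gH) = ∑ z, f z * ξ (z⁻¹ g H)`. -/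
noncomputable def quasiReg (H : Subgroup G) (f : G →₀ ℂ) (ξ : (G ⧸ H) →₀ ℂ) :
    (G ⧸ H) →₀ ℂ :=
  f.sum fun z c => c • Finsupp.mapDomain (fun q => z • q) ξ

/-- Quasi-regular operator norm `‖λ_{G/H}(f)‖`. -/
noncomputable def quasiRegOpNorm (H : Subgroup G) (f : G →₀ ℂ) : ℝ :=
  sSup {c : ℝ | ∃ ξ : (G ⧸ H) →₀ ℂ, l2Norm ξ ≤ 1 ∧ c = l2Norm (quasiReg H f ξ)}

/-- Embed a real finitely supported function into the complex valued ones. -/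
noncomputable def toC {α : Type*} (f : α →₀ ℝ) : α →₀ ℂ :=
  f.mapRange Complex.ofReal Complex.ofReal_zero

/-- Pointwise weight of a function by `(1 + ℓ)^s`. -/
noncomputable def weight (S : Set G) (s : ℝ) (f : G →₀ ℂ) : G →₀ ℂ where
  support := f.support
  toFun x := ((((1 : ℝ) + (wordLength S x : ℝ)) ^ s : ℝ) : ℂ) * f x
  mem_support_toFun x := by
    simp only [Finsupp.mem_support_iff]
    have hpos : (0 : ℝ) < ((1 : ℝ) + (wordLength S x : ℝ)) ^ s :=
      Real.rpow_pos_of_pos (by positivity) s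
    constructor
    · intro hf h
      rcases mul_eq_zero.mp h with h1 | h2
      · exact hpos.ne' (by exact_mod_cast h1)
      · exact hf h2
    · intro h hf
      exact h (by rw [hf, mul_zero])

/-- The involution `f⋆ x = f x⁻¹`. -/
noncomputable def starFun {k : Type*} [Zero k] (f : G →₀ k) : G →₀ k :=
  Finsupp.equivMapDomain (Equiv.inv G) f

/-- Sum of the values of `g` over the subgroup `H`. -/
noncomputable def sumOverSubgroup (H : Subgroup G) (g : G →₀ ℝ) : ℝ :=
  ∑ x ∈ g.support.filter (fun x => x ∈ H), g x

/-- `f` is supported in the ball of radius `R` for the word length of `S`. -/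
def supportedInBall (S : Set G) (R : ℕ) {k : Type*} [Zero k] (f : G →₀ k) : Prop :=
  ∀ x ∈ f.support, wordLength S x ≤ R

/-- Rapid decay property for the pair `(G, H)`. -/
def PairRD (S : Set G) (H : Subgroup G) : Prop :=
  ∃ C : ℝ, ∃ D : ℕ, 0 ≤ C ∧ ∀ (R : ℕ) (f ϕ : G →₀ ℂ), supportedInBall S R f →
    l21Norm H (conv f ϕ) ≤ C * ((R : ℝ) + 1) ^ D * l21Norm H f * l21Norm H ϕ

/-- Rapid decay property for the group `G`. -/
def GroupRD (S : Set G) : Prop :=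
  ∃ C : ℝ, ∃ D : ℕ, 0 ≤ C ∧ ∀ (R : ℕ) (f ϕ : G →₀ ℂ), supportedInBall S R f →
    l2Norm (conv f ϕ) ≤ C * ((R : ℝ) + 1) ^ D * l2Norm f * l2Norm ϕ

/-- Polynomial growth of a subgroup for the induced length. -/
def polyGrowthSubgroup (S : Set G) (H : Subgroup G) : Prop :=
  ∃ C : ℝ, ∃ D : ℕ, 0 ≤ C ∧ ∀ R : ℕ,
    (Set.ncard {x : G | x ∈ H ∧ wordLength S x ≤ R} : ℝ) ≤ C * ((R : ℝ) + 1) ^ D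

/-- Polynomial growth of the coset space `G/H`. -/
def polyGrowthQuotient (S : Set G) (H : Subgroup G) : Prop :=
  ∃ C : ℝ, ∃ D : ℕ, 0 ≤ C ∧ ∀ R : ℕ,
    (Set.ncard ((QuotientGroup.mk : G → G ⧸ H) '' {x : G | wordLength S x ≤ R}) : ℝ) ≤
      C * ((R : ℝ) + 1) ^ D

/-- Co-amenability of `H` in `G`: Følner condition for the left action on `G/H`. -/
def Coamenable (H : Subgroup G) : Prop :=
  ∀ ε : ℝ, 0 < ε → ∀ F : Finset G, ∃ V : Finset (G ⧸ H), V.Nonempty ∧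
    ((symmDiff (Finset.image₂ (· • ·) F V) V).card : ℝ) ≤ ε * (V.card : ℝ)

/-- Matrix coefficient `⟨λ_{G/H}(γ) ξ, η⟩` of the quasi-regular representation
on `ℓ²(G/H)`. -/
noncomputable def qrCoeff (H : Subgroup G) (γ : G)
    (ξ η : lp (fun _ : G ⧸ H => ℂ) 2) : ℂ :=
  ∑' q : G ⧸ H, ξ (γ⁻¹ • q) * (starRingEnd ℂ) (η q)

/-- The spectral radius of the random walk induced on `G/H`:
`ρ = limsup P_{2n}(H,H)^{1/(2n)}`. -/
noncomputable def specRadQuot (H : Subgroup G) (μ : G →₀ ℝ) : ℝ :=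
  Filter.limsup (fun n : ℕ =>
    (sumOverSubgroup H (convPow μ (2 * n))) ^ ((1 : ℝ) / (2 * (n : ℝ)))) Filter.atTop

end Defs

/- Everything is computed coset by coset. For a left-invariant seminorm `N` on functions on `G`,
the profile `q ↦ N (ϕ restricted to q)` on `G ⧸ H` satisfies, by the triangle inequality,
`N ((f * ϕ) restricted to q) ≤ ∑ z, |f z| N (ϕ restricted to z⁻¹ q)`, the value at `q` of
`λ_{G/H}(|f|)` applied to the profile of `ϕ`. For `N = ℓ¹` the ℓ²-norm of the profile is the
`(2,1)`-norm of `ϕ`, for `N = ℓ²` it is the ℓ²-norm of `ϕ`; hence `‖f‖_h` and `‖f‖_*` are both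
at most `‖λ_{G/H}(|f|)‖`. Conversely, pushing forward to `G ⧸ H` intertwines convolution with
`λ_{G/H}` and bounds the ℓ²-norm of the image by the `(2,1)`-norm, with equality for functions
supported on a transversal; so `‖λ_{G/H}(f)‖ ≤ ‖f‖_h`. -/

open Finsupp

section Norms

variable {𝕜 α k : Type*} [NormedAddCommGroup k]

theorem l1Norm_eq_sum_of_support_subset {f : α →₀ k} {T : Finset α} (hT : f.support ⊆ T) :
    l1Norm f = ∑ x ∈ T, ‖f x‖ :=
  f.sum_of_support_subset hT (fun _ c => ‖c‖) (by simp)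

theorem l2Norm_eq_sqrt_sum_of_support_subset {f : α →₀ k} {T : Finset α} (hT : f.support ⊆ T) :
    l2Norm f = √(∑ x ∈ T, ‖f x‖ ^ 2) :=
  congrArg Real.sqrt (f.sum_of_support_subset hT (fun _ c => ‖c‖ ^ 2) (by simp))

theorem l2Norm_eq_norm_toLp {f : α →₀ k} {T : Finset α} (hT : f.support ⊆ T) :
    l2Norm f = ‖WithLp.toLp 2 (fun x : T => f x)‖ := by
  rw [l2Norm_eq_sqrt_sum_of_support_subset hT, PiLp.norm_eq_of_L2, ← Finset.sum_coe_sort T]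

theorem support_mapRange_norm (f : α →₀ k) : (f.mapRange norm norm_zero).support = f.support := by
  ext x
  simp

theorem l2Norm_le_of_forall_norm_le {k' : Type*} [NormedAddCommGroup k'] {f : α →₀ k}
    {g : α →₀ k'} (h : ∀ x, ‖f x‖ ≤ ‖g x‖) : l2Norm f ≤ l2Norm g := by
  classical
  rw [l2Norm_eq_sqrt_sum_of_support_subset (T := f.support ∪ g.support) Finset.subset_union_left,
    l2Norm_eq_sqrt_sum_of_support_subset (T := f.support ∪ g.support) Finset.subset_union_right]
  gcongr with x
  exact h x

theorem l2Norm_congr {k' : Type*} [NormedAddCommGroup k'] {f : α →₀ k} {g : α →₀ k'}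
    (h : ∀ x, ‖f x‖ = ‖g x‖) : l2Norm f = l2Norm g :=
  (l2Norm_le_of_forall_norm_le fun x => (h x).le).antisymm
    (l2Norm_le_of_forall_norm_le fun x => (h x).ge)

theorem l1Norm_add_le (f g : α →₀ k) : l1Norm (f + g) ≤ l1Norm f + l1Norm g := by
  classical
  rw [l1Norm_eq_sum_of_support_subset support_add,
    l1Norm_eq_sum_of_support_subset Finset.subset_union_left,
    l1Norm_eq_sum_of_support_subset Finset.subset_union_right, ← Finset.sum_add_distrib]
  exact Finset.sum_le_sum fun x _ => norm_add_le _ _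

theorem l2Norm_add_le (f g : α →₀ k) : l2Norm (f + g) ≤ l2Norm f + l2Norm g := by
  classical
  rw [l2Norm_eq_norm_toLp support_add, l2Norm_eq_norm_toLp (T := f.support ∪ g.support)
    Finset.subset_union_left, l2Norm_eq_norm_toLp (T := f.support ∪ g.support)
    Finset.subset_union_right]
  calc _ = ‖WithLp.toLp 2 (fun x : ↥(f.support ∪ g.support) => f x) +
        WithLp.toLp 2 fun x : ↥(f.support ∪ g.support) => g x‖ := by
        rw [← WithLp.toLp_add]; rfl
    _ ≤ _ := norm_add_le _ _

theorem l1Norm_mapDomain_of_injective {β : Type*} {u : α → β} (hu : u.Injective)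
    (f : α →₀ k) : l1Norm (mapDomain u f) = l1Norm f := by
  rw [l1Norm, mapDomain_support_of_injective hu, Finset.sum_image hu.injOn]
  simp only [mapDomain_apply hu]
  rfl

theorem l2Norm_mapDomain_of_injective {β : Type*} {u : α → β} (hu : u.Injective)
    (f : α →₀ k) : l2Norm (mapDomain u f) = l2Norm f := by
  rw [l2Norm, mapDomain_support_of_injective hu, Finset.sum_image hu.injOn]
  simp only [mapDomain_apply hu]
  rfl

variable [NormedField 𝕜] [NormedSpace 𝕜 k]

theorem l1Norm_smul (c : 𝕜) (f : α →₀ k) : l1Norm (c • f) = ‖c‖ * l1Norm f := by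
  rw [l1Norm_eq_sum_of_support_subset support_smul, l1Norm, Finset.mul_sum]
  simp only [Finsupp.smul_apply, norm_smul]

theorem l2Norm_smul (c : 𝕜) (f : α →₀ k) : l2Norm (c • f) = ‖c‖ * l2Norm f := by
  rw [l2Norm_eq_sqrt_sum_of_support_subset support_smul, l2Norm,
    ← Real.sqrt_sq (norm_nonneg c), ← Real.sqrt_mul (sq_nonneg _), Finset.mul_sum]
  simp only [Finsupp.smul_apply, norm_smul, mul_pow]

variable (𝕜 α k)

noncomputable def l1Seminorm : Seminorm 𝕜 (α →₀ k) :=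
  Seminorm.of l1Norm l1Norm_add_le l1Norm_smul

noncomputable def l2Seminorm : Seminorm 𝕜 (α →₀ k) :=
  Seminorm.of l2Norm l2Norm_add_le l2Norm_smul

variable {𝕜 α k}

theorem l2Seminorm_apply (f : α →₀ k) : l2Seminorm 𝕜 α k f = l2Norm f := rfl

end Norms

section Cosets

variable {G : Type*} [Group G] (H : Subgroup G)

theorem mapDomain_mk_apply {M : Type*} [AddCommMonoid M] (v : G →₀ M) (q : G ⧸ H) :
    mapDomain (QuotientGroup.mk : G → G ⧸ H) v q =
      ∑ x ∈ v.support with QuotientGroup.mk x = q, v x := by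
  obtain ⟨g, rfl⟩ := QuotientGroup.mk_surjective q
  exact mapDomain_apply_eq_sum _ v

noncomputable def cosetRestrict {M : Type*} [Zero M] (q : G ⧸ H) (ϕ : G →₀ M) : G →₀ M :=
  ϕ.filter fun x => (x : G ⧸ H) = q

theorem cosetRestrict_apply {M : Type*} [Zero M] (q : G ⧸ H) (ϕ : G →₀ M) (x : G) :
    cosetRestrict H q ϕ x = if (x : G ⧸ H) = q then ϕ x else 0 :=
  filter_apply _ _ _

variable {k : Type*} [NormedAddCommGroup k]

theorem l1Norm_cosetRestrict (q : G ⧸ H) (ϕ : G →₀ k) :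
    l1Norm (cosetRestrict H q ϕ) = ∑ x ∈ ϕ.support with QuotientGroup.mk x = q, ‖ϕ x‖ :=
  Finset.sum_congr rfl fun _ hx => by
    rw [cosetRestrict_apply, if_pos (Finset.mem_filter.1 hx).2]

theorem l2Norm_cosetRestrict_sq (q : G ⧸ H) (ϕ : G →₀ k) :
    l2Norm (cosetRestrict H q ϕ) ^ 2 = ∑ x ∈ ϕ.support with QuotientGroup.mk x = q, ‖ϕ x‖ ^ 2 := by
  rw [l2Norm, Real.sq_sqrt (Finset.sum_nonneg fun _ _ => sq_nonneg _)]
  exact Finset.sum_congr rfl fun _ hx => by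
    rw [cosetRestrict_apply, if_pos (Finset.mem_filter.1 hx).2]

theorem mapDomain_mk_mapRange_norm_apply (ϕ : G →₀ k) (q : G ⧸ H) :
    mapDomain QuotientGroup.mk (ϕ.mapRange norm norm_zero) q = l1Norm (cosetRestrict H q ϕ) := by
  rw [mapDomain_mk_apply, support_mapRange_norm, l1Norm_cosetRestrict]
  rfl

theorem l2Norm_mapDomain_mk_le_l21Norm (ϕ : G →₀ k) :
    l2Norm (mapDomain (QuotientGroup.mk : G → G ⧸ H) ϕ) ≤ l21Norm H ϕ := by
  refine l2Norm_le_of_forall_norm_le fun q => ?_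
  rw [mapDomain_mk_mapRange_norm_apply, mapDomain_mk_apply, l1Norm_cosetRestrict]
  exact (norm_sum_le _ _).trans (le_abs_self _)

variable {𝕜 : Type*} [NormedField 𝕜] [NormedSpace 𝕜 k]

noncomputable def cosetNorm (N : Seminorm 𝕜 (G →₀ k)) (ϕ : G →₀ k) : G ⧸ H →₀ ℝ :=
  onFinset (ϕ.support.image (↑)) (fun q => N (cosetRestrict H q ϕ)) fun q hq => by
    obtain ⟨x, hx⟩ : (cosetRestrict H q ϕ).support.Nonempty := by
      rw [Finsupp.support_nonempty_iff]
      rintro h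
      exact hq (by rw [h, map_zero])
    rw [cosetRestrict, support_filter, Finset.mem_filter] at hx
    exact Finset.mem_image.2 ⟨x, hx⟩

variable (N : Seminorm 𝕜 (G →₀ k))

theorem cosetNorm_apply (ϕ : G →₀ k) (q : G ⧸ H) :
    cosetNorm H N ϕ q = N (cosetRestrict H q ϕ) := rfl

theorem cosetNorm_nonneg (ϕ : G →₀ k) (q : G ⧸ H) : 0 ≤ cosetNorm H N ϕ q :=
  apply_nonneg N _

theorem support_cosetNorm_subset (ϕ : G →₀ k) :
    (cosetNorm H N ϕ).support ⊆ ϕ.support.image (↑) :=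
  support_onFinset_subset

theorem l21Norm_eq_l2Norm_cosetNorm (ϕ : G →₀ k) :
    l21Norm H ϕ = l2Norm (cosetNorm H (l1Seminorm 𝕜 G k) ϕ) := by
  rw [l21Norm]
  congr 1
  ext q
  exact mapDomain_mk_mapRange_norm_apply H ϕ q

theorem l2Norm_cosetNorm_l2Seminorm (ϕ : G →₀ k) :
    l2Norm (cosetNorm H (l2Seminorm 𝕜 G k) ϕ) = l2Norm ϕ := by
  rw [l2Norm_eq_sqrt_sum_of_support_subset (support_cosetNorm_subset H _ ϕ), l2Norm]
  congr 1
  calc _ = ∑ q ∈ ϕ.support.image (↑), ∑ x ∈ ϕ.support with QuotientGroup.mk x = q, ‖ϕ x‖ ^ 2 := by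
        refine Finset.sum_congr rfl fun q _ => ?_
        rw [Real.norm_of_nonneg (cosetNorm_nonneg H _ ϕ q), cosetNorm_apply]
        exact l2Norm_cosetRestrict_sq H q ϕ
    _ = _ := Finset.sum_fiberwise_of_maps_to (g := (QuotientGroup.mk : G → G ⧸ H))
        (fun x hx => Finset.mem_image_of_mem _ hx) _

end Cosets

section Convolution

variable {G : Type*} [Group G] (H : Subgroup G)

theorem mapDomain_mul_left_apply {M : Type*} [AddCommMonoid M] (z : G) (v : G →₀ M) (x : G) :
    mapDomain (z * ·) v x = v (z⁻¹ * x) :=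
  mapDomain_equiv_apply (f := Equiv.mulLeft z) v x

theorem mapDomain_smul_apply {M : Type*} [AddCommMonoid M] (z : G) (v : G ⧸ H →₀ M)
    (q : G ⧸ H) : mapDomain (z • ·) v q = v (z⁻¹ • q) :=
  mapDomain_equiv_apply (f := MulAction.toPerm z) v q

theorem conv_eq_sum (f ϕ : G →₀ ℂ) :
    conv f ϕ = ∑ z ∈ f.support, f z • mapDomain (z * ·) ϕ := rfl

theorem quasiReg_eq_sum (f : G →₀ ℂ) (ξ : G ⧸ H →₀ ℂ) :
    quasiReg H f ξ = ∑ z ∈ f.support, f z • mapDomain (z • ·) ξ := rfl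

theorem conv_apply (f ϕ : G →₀ ℂ) (x : G) :
    conv f ϕ x = ∑ z ∈ f.support, f z * ϕ (z⁻¹ * x) := by
  simp only [conv_eq_sum, finsetSum_apply, Finsupp.smul_apply, smul_eq_mul,
    mapDomain_mul_left_apply]

theorem quasiReg_apply (f : G →₀ ℂ) (ξ : G ⧸ H →₀ ℂ) (q : G ⧸ H) :
    quasiReg H f ξ q = ∑ z ∈ f.support, f z * ξ (z⁻¹ • q) := by
  simp only [quasiReg_eq_sum, finsetSum_apply, Finsupp.smul_apply, smul_eq_mul,
    mapDomain_smul_apply]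

theorem mapDomain_mk_conv (f ϕ : G →₀ ℂ) :
    mapDomain (QuotientGroup.mk : G → G ⧸ H) (conv f ϕ) =
      quasiReg H f (mapDomain QuotientGroup.mk ϕ) := by
  rw [conv_eq_sum, quasiReg_eq_sum, mapDomain_finsetSum]
  refine Finset.sum_congr rfl fun z _ => ?_
  rw [mapDomain_smul, ← mapDomain_comp, ← mapDomain_comp]
  rfl

theorem cosetRestrict_conv (f ϕ : G →₀ ℂ) (q : G ⧸ H) :
    cosetRestrict H q (conv f ϕ) =
      ∑ z ∈ f.support, f z • mapDomain (z * ·) (cosetRestrict H (z⁻¹ • q) ϕ) := by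
  ext x
  have hmk : ∀ z : G, ((z⁻¹ * x : G) : G ⧸ H) = z⁻¹ • q ↔ (x : G ⧸ H) = q := fun z => by
    change z⁻¹ • (x : G ⧸ H) = z⁻¹ • q ↔ _
    exact smul_left_cancel_iff _
  simp only [cosetRestrict_apply, conv_apply, finsetSum_apply, Finsupp.smul_apply, smul_eq_mul,
    mapDomain_mul_left_apply, hmk]
  split_ifs <;> simp

theorem cosetNorm_conv_le (N : Seminorm ℂ (G →₀ ℂ))
    (hN : ∀ z ψ, N (mapDomain (z * ·) ψ) = N ψ) (f ϕ : G →₀ ℂ) (q : G ⧸ H) :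
    cosetNorm H N (conv f ϕ) q ≤ ∑ z ∈ f.support, ‖f z‖ * cosetNorm H N ϕ (z⁻¹ • q) := by
  rw [cosetNorm_apply, cosetRestrict_conv]
  refine (Finset.le_sum_of_subadditive N (map_zero N).le (map_add_le_add N) _ _).trans_eq ?_
  simp only [map_smul_eq_mul, hN, cosetNorm_apply]

theorem support_toC {α : Type*} (a : α →₀ ℝ) : (toC a).support = a.support := by
  ext x
  simp [toC]

theorem l2Norm_toC {α : Type*} (a : α →₀ ℝ) : l2Norm (toC a) = l2Norm a :=
  l2Norm_congr fun x => Complex.norm_real (a x)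

theorem quasiReg_toC_apply (a : G →₀ ℝ) (ψ : G ⧸ H →₀ ℝ) (q : G ⧸ H) :
    quasiReg H (toC a) (toC ψ) q = ((∑ z ∈ a.support, a z * ψ (z⁻¹ • q) : ℝ) : ℂ) := by
  rw [quasiReg_apply, support_toC]
  push_cast
  rfl

theorem l2Norm_cosetNorm_conv_le (N : Seminorm ℂ (G →₀ ℂ))
    (hN : ∀ z ψ, N (mapDomain (z * ·) ψ) = N ψ) (f ϕ : G →₀ ℂ) :
    l2Norm (cosetNorm H N (conv f ϕ)) ≤
      l2Norm (quasiReg H (toC (f.mapRange norm norm_zero)) (toC (cosetNorm H N ϕ))) := by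
  refine l2Norm_le_of_forall_norm_le fun q => ?_
  rw [quasiReg_toC_apply, support_mapRange_norm, Complex.norm_real,
    Real.norm_of_nonneg (cosetNorm_nonneg H N _ q)]
  exact (cosetNorm_conv_le H N hN f ϕ q).trans (le_abs_self _)

end Convolution

section OperatorNorms

variable {G : Type*} [Group G] (H : Subgroup G)

theorem l2Norm_quasiReg_le (f : G →₀ ℂ) (ξ : G ⧸ H →₀ ℂ) :
    l2Norm (quasiReg H f ξ) ≤ l1Norm f * l2Norm ξ := by
  rw [quasiReg_eq_sum, l1Norm, Finset.sum_mul]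
  refine (Finset.le_sum_of_subadditive (l2Seminorm ℂ (G ⧸ H) ℂ) (map_zero _).le
    (map_add_le_add _) _ _).trans_eq ?_
  simp only [map_smul_eq_mul, l2Seminorm_apply,
    l2Norm_mapDomain_of_injective (MulAction.injective _)]

theorem l2Norm_quasiReg_le_quasiRegOpNorm {f : G →₀ ℂ} {ξ : G ⧸ H →₀ ℂ} (hξ : l2Norm ξ ≤ 1) :
    l2Norm (quasiReg H f ξ) ≤ quasiRegOpNorm H f := by
  refine le_csSup ⟨l1Norm f, ?_⟩ ⟨ξ, hξ, rfl⟩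
  rintro _ ⟨η, hη, rfl⟩
  exact (l2Norm_quasiReg_le H f η).trans
    (mul_le_of_le_one_right (Finset.sum_nonneg fun _ _ => norm_nonneg _) hη)

theorem l2Norm_cosetNorm_conv_le_quasiRegOpNorm (N : Seminorm ℂ (G →₀ ℂ))
    (hN : ∀ z ψ, N (mapDomain (z * ·) ψ) = N ψ) {f ϕ : G →₀ ℂ}
    (hϕ : l2Norm (cosetNorm H N ϕ) ≤ 1) :
    l2Norm (cosetNorm H N (conv f ϕ)) ≤ quasiRegOpNorm H (toC (f.mapRange norm norm_zero)) :=
  (l2Norm_cosetNorm_conv_le H N hN f ϕ).trans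
    (l2Norm_quasiReg_le_quasiRegOpNorm H (by rwa [l2Norm_toC]))

theorem l21Norm_conv_le_quasiRegOpNorm {f ϕ : G →₀ ℂ} (hϕ : l21Norm H ϕ ≤ 1) :
    l21Norm H (conv f ϕ) ≤ quasiRegOpNorm H (toC (f.mapRange norm norm_zero)) := by
  rw [l21Norm_eq_l2Norm_cosetNorm (𝕜 := ℂ)] at hϕ ⊢
  exact l2Norm_cosetNorm_conv_le_quasiRegOpNorm H _
    (fun z => l1Norm_mapDomain_of_injective (mul_right_injective z)) hϕ

theorem l2Norm_conv_le_quasiRegOpNorm {f ξ : G →₀ ℂ} (hξ : l2Norm ξ ≤ 1) :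
    l2Norm (conv f ξ) ≤ quasiRegOpNorm H (toC (f.mapRange norm norm_zero)) := by
  rw [← l2Norm_cosetNorm_l2Seminorm H (𝕜 := ℂ)] at hξ ⊢
  exact l2Norm_cosetNorm_conv_le_quasiRegOpNorm H _
    (fun z => l2Norm_mapDomain_of_injective (mul_right_injective z)) hξ

theorem l21Norm_conv_le_hybridOpNorm {f ϕ : G →₀ ℂ} (hϕ : l21Norm H ϕ ≤ 1) :
    l21Norm H (conv f ϕ) ≤ hybridOpNorm H f := by
  refine le_csSup ⟨quasiRegOpNorm H (toC (f.mapRange norm norm_zero)), ?_⟩ ⟨ϕ, hϕ, rfl⟩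
  rintro _ ⟨ψ, hψ, rfl⟩
  exact l21Norm_conv_le_quasiRegOpNorm H hψ

theorem hybridOpNorm_le_quasiRegOpNorm (f : G →₀ ℂ) :
    hybridOpNorm H f ≤ quasiRegOpNorm H (toC (f.mapRange norm norm_zero)) := by
  refine csSup_le ⟨_, 0, by simp [l21Norm, l2Norm], rfl⟩ ?_
  rintro _ ⟨ϕ, hϕ, rfl⟩
  exact l21Norm_conv_le_quasiRegOpNorm H hϕ

theorem regOpNorm_le_quasiRegOpNorm (f : G →₀ ℂ) :
    regOpNorm f ≤ quasiRegOpNorm H (toC (f.mapRange norm norm_zero)) := by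
  refine csSup_le ⟨_, 0, by simp [l2Norm], rfl⟩ ?_
  rintro _ ⟨ξ, hξ, rfl⟩
  exact l2Norm_conv_le_quasiRegOpNorm H hξ

theorem mapDomain_mk_embDomain_out {M : Type*} [AddCommMonoid M] (ξ : G ⧸ H →₀ M) :
    mapDomain QuotientGroup.mk (embDomain ⟨Quotient.out, Quotient.out_injective⟩ ξ) = ξ := by
  rw [embDomain_eq_mapDomain, ← mapDomain_comp]
  exact (congrArg (mapDomain · ξ) (funext QuotientGroup.out_eq')).trans mapDomain_id

theorem l21Norm_embDomain_out (ξ : G ⧸ H →₀ ℂ) :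
    l21Norm H (embDomain ⟨Quotient.out, Quotient.out_injective⟩ ξ) = l2Norm ξ := by
  rw [l21Norm, ← embDomain_mapRange, mapDomain_mk_embDomain_out]
  exact l2Norm_congr fun q => norm_norm (ξ q)

theorem quasiRegOpNorm_le_hybridOpNorm (f : G →₀ ℂ) : quasiRegOpNorm H f ≤ hybridOpNorm H f := by
  refine csSup_le ⟨_, 0, by simp [l2Norm], rfl⟩ ?_
  rintro _ ⟨ξ, hξ, rfl⟩
  set ϕ := embDomain ⟨Quotient.out, Quotient.out_injective⟩ ξ
  calc l2Norm (quasiReg H f ξ) = l2Norm (mapDomain QuotientGroup.mk (conv f ϕ)) := by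
        rw [mapDomain_mk_conv, mapDomain_mk_embDomain_out]
    _ ≤ l21Norm H (conv f ϕ) := l2Norm_mapDomain_mk_le_l21Norm H _
    _ ≤ hybridOpNorm H f := l21Norm_conv_le_hybridOpNorm H (by rwa [l21Norm_embDomain_out])

end OperatorNorms

theorem statement2_general {G : Type*} [Group G] (H : Subgroup G) :
    (∀ f : G →₀ ℂ, quasiRegOpNorm H f ≤ hybridOpNorm H f) ∧
    (∀ f : G →₀ ℝ, (∀ x, 0 ≤ f x) →
      regOpNorm (toC f) ≤ quasiRegOpNorm H (toC f) ∧
      quasiRegOpNorm H (toC f) = hybridOpNorm H (toC f)) := by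
  refine ⟨quasiRegOpNorm_le_hybridOpNorm H, fun f hf => ?_⟩
  have habs : toC ((toC f).mapRange norm norm_zero) = toC f := by
    ext x
    simp [toC, abs_of_nonneg (hf x)]
  have hreg := regOpNorm_le_quasiRegOpNorm H (toC f)
  have hhyb := hybridOpNorm_le_quasiRegOpNorm H (toC f)
  rw [habs] at hreg hhyb
  exact ⟨hreg, (quasiRegOpNorm_le_hybridOpNorm H _).antisymm hhyb⟩

/-- comparison of the quasi-regular, hybrid and regular operator
norms. -/
theorem statement2 {G : Type*} [Group G] (S : Set G) (hfin : S.Finite)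
    (hsym : ∀ s ∈ S, s⁻¹ ∈ S) (hgen : Subgroup.closure S = ⊤) (H : Subgroup G) :
    (∀ f : G →₀ ℂ, quasiRegOpNorm H f ≤ hybridOpNorm H f) ∧
    (∀ f : G →₀ ℝ, (∀ x, 0 ≤ f x) →
      regOpNorm (toC f) ≤ quasiRegOpNorm H (toC f) ∧
      quasiRegOpNorm H (toC f) = hybridOpNorm H (toC f)) :=
  statement2_general H
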